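/- arXiv:2605.26342 — 3 statements merged into one kernel-verified Lean document; each statement's English description precedes it below -/
import Mathlib

section
/- If θ satisfies 1/2 < tan θ < 13/21, then T_θ maps the whole interval (0,1) into (2·tan θ − 1, 1), and consequently the second affine branch of T_θ has a fixed point x̂ ∈ (2 tan θ − 1, 1). -/
/-- The first-return map `T_θ` of the paper, as a piecewise affine map. -/
noncomputable def Tmap (θ x : ℝ) : ℝ :=
  if x < 2 * Real.tan θ - 1 then x / 16 + 1 - (4 * Real.tan θ - 1) / 16
  else (x - 1) / 16 + 1 - (3 * Real.tan θ + 1) / 4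

theorem stmt3 (θ : ℝ) (h1 : 1 / 2 < Real.tan θ) (h2 : Real.tan θ < 13 / 21) :
    (Tmap θ '' Set.Ioo 0 1 ⊆ Set.Ioo (2 * Real.tan θ - 1) 1) ∧
    ∃ x ∈ Set.Ioo (2 * Real.tan θ - 1) (1 : ℝ),
      (x - 1) / 16 + 1 - (3 * Real.tan θ + 1) / 4 = x := by
  set t := Real.tan θ with ht
  constructor
  · rintro y ⟨x, ⟨hx0, hx1⟩, rfl⟩
    rw [Set.mem_Ioo]
    unfold Tmap
    rw [← ht]
    split_ifs with h
    · constructor <;> linarith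
    · constructor <;> linarith
  · refine ⟨(11 - 12 * t) / 15, ⟨by linarith, by linarith⟩, by ring⟩
end

section
/- If θ satisfies 7/11 < tan θ < 11/12, then T_θ maps the interval (0, 2·tan θ − 1) into (2·tan θ − 1, 1) and maps (2·tan θ − 1, 1) into (0, 2·tan θ − 1); consequently T_θ ∘ T_θ (using the appropriate branches) has a fixed point, i.e. T_θ has a periodic point of period 2. -/
theorem stmt4 (θ : ℝ) (h1 : 7 / 11 < Real.tan θ) (h2 : Real.tan θ < 11 / 12) :
    (Tmap θ '' Set.Ioo 0 (2 * Real.tan θ - 1) ⊆ Set.Ioo (2 * Real.tan θ - 1) 1) ∧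
    (Tmap θ '' Set.Ioo (2 * Real.tan θ - 1) 1 ⊆ Set.Ioo 0 (2 * Real.tan θ - 1)) ∧
    ∃ x ∈ Set.Ioo (0 : ℝ) 1, x ≠ 2 * Real.tan θ - 1 ∧
      Tmap θ (Tmap θ x) = x ∧ Tmap θ x ≠ x := by
  set t := Real.tan θ with ht
  refine ⟨?_, ?_, ?_⟩
  · rintro y ⟨x, ⟨hx0, hx1⟩, rfl⟩
    rw [Tmap, if_pos hx1]
    exact ⟨by nlinarith, by nlinarith⟩
  · rintro y ⟨x, ⟨hx0, hx1⟩, rfl⟩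
    rw [Tmap, if_neg (not_lt.mpr (le_of_lt hx0))]
    exact ⟨by nlinarith, by nlinarith⟩
  · refine ⟨(193 - 196 * t) / 255, ⟨by nlinarith, by nlinarith⟩, by nlinarith, ?_, ?_⟩
    · have hinner : Tmap θ ((193 - 196 * t) / 255)
          = ((193 - 196 * t) / 255 + 17 - 4 * t) / 16 := by
        rw [Tmap, if_pos (by nlinarith)]; ring
      rw [hinner, Tmap, if_neg (not_lt.mpr (by nlinarith))]
      ring
    · rw [Tmap, if_pos (by nlinarith)]
      intro h
      nlinarith [h]
end

section
/- Let γ = (γ₁, γ₂) be a solution of the ODE γ′ = v∘γ for a homogeneous vector field v of degree k with γ₂ never vanishing, let δ := γ₁/γ₂, P(x,y) := x v₂(x,y) − y v₁(x,y), and p(z) := P(z, 1). Then γ₂(t)^{k−1} = −δ′(t)/p(δ(t)) for all t in the domain (wherever p(δ(t)) ≠ 0). -/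
/-! Homogeneity of degree `k` gives `vᵢ(γ₁, γ₂) = γ₂ᵏ vᵢ(δ, 1)` along the trajectory, so the
quotient rule for `δ = γ₁ / γ₂` yields `δ' = (v₁ γ₂ - γ₁ v₂) / γ₂² = -γ₂ᵏ⁻¹ p(δ)`. -/

theorem apply_eq_pow_mul_apply_div_one {K : Type*} [Field K] {k : ℕ} {f : K → K → K}
    (hf : ∀ c x y, f (c * x) (c * y) = c ^ k * f x y) (x : K) {y : K} (hy : y ≠ 0) :
    f x y = y ^ k * f (x / y) 1 := by
  rw [← hf, mul_div_cancel₀ x hy, mul_one]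

theorem hasDerivAt_div_of_homogeneous_ode {𝕜 𝕜' : Type*} [NontriviallyNormedField 𝕜]
    [NontriviallyNormedField 𝕜'] [NormedAlgebra 𝕜 𝕜'] {k : ℕ} (hk : 1 ≤ k)
    {v₁ v₂ : 𝕜' → 𝕜' → 𝕜'}
    (hhom₁ : ∀ c x y, v₁ (c * x) (c * y) = c ^ k * v₁ x y)
    (hhom₂ : ∀ c x y, v₂ (c * x) (c * y) = c ^ k * v₂ x y)
    {γ₁ γ₂ : 𝕜 → 𝕜'} {t : 𝕜} (hγ₂ : γ₂ t ≠ 0)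
    (hode₁ : HasDerivAt γ₁ (v₁ (γ₁ t) (γ₂ t)) t)
    (hode₂ : HasDerivAt γ₂ (v₂ (γ₁ t) (γ₂ t)) t) :
    HasDerivAt (fun s => γ₁ s / γ₂ s)
      (-(γ₂ t ^ (k - 1) *
        (γ₁ t / γ₂ t * v₂ (γ₁ t / γ₂ t) 1 - v₁ (γ₁ t / γ₂ t) 1))) t := by
  refine (hode₁.div hode₂ hγ₂).congr_deriv ?_
  set δ := γ₁ t / γ₂ t with hδ
  have hγ₁ : γ₁ t = γ₂ t * δ := by rw [hδ, mul_div_cancel₀ _ hγ₂]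
  rw [apply_eq_pow_mul_apply_div_one hhom₁ _ hγ₂, apply_eq_pow_mul_apply_div_one hhom₂ _ hγ₂,
    hγ₁]
  obtain ⟨m, rfl⟩ : ∃ m, k = m + 1 := ⟨k - 1, by omega⟩
  rw [Nat.add_sub_cancel]
  field_simp
  ring

theorem stmt13 (k : ℕ) (hk : 2 ≤ k)
    (v₁ v₂ : ℂ → ℂ → ℂ)
    (hhom₁ : ∀ (c x y : ℂ), v₁ (c * x) (c * y) = c ^ k * v₁ x y)
    (hhom₂ : ∀ (c x y : ℂ), v₂ (c * x) (c * y) = c ^ k * v₂ x y)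
    (γ₁ γ₂ : ℝ → ℂ) (hγ₂ : ∀ t, γ₂ t ≠ 0)
    (hode₁ : ∀ t, HasDerivAt γ₁ (v₁ (γ₁ t) (γ₂ t)) t)
    (hode₂ : ∀ t, HasDerivAt γ₂ (v₂ (γ₁ t) (γ₂ t)) t)
    (p : ℂ → ℂ) (hp : ∀ z, p z = z * v₂ z 1 - v₁ z 1)
    (δ : ℝ → ℂ) (hδ : ∀ t, δ t = γ₁ t / γ₂ t)
    (t : ℝ) (hpt : p (δ t) ≠ 0) :
    γ₂ t ^ (k - 1) = -(deriv δ t) / p (δ t) := by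
  have hderiv : HasDerivAt δ (-(γ₂ t ^ (k - 1) * p (δ t))) t := by
    rw [funext hδ, hp]
    exact hasDerivAt_div_of_homogeneous_ode (by omega) hhom₁ hhom₂ (hγ₂ t) (hode₁ t) (hode₂ t)
  rw [hderiv.deriv, neg_neg, mul_div_cancel_right₀ _ hpt]
end
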